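/- Fix an integer n ≥ 1 and reals a1,a2,b1,b2,c1,c2,d1,d2,e,f,g,h satisfying e = −g, f = −h, a1+c1+n·(a2+c2) = 0 and b1+d1+n·(b2+d2) = 0, and let W be the associated restricted-form matrix. Then ‖W‖_* = (n−1)·√(M1) + √(2·M2), where M1 = a1²+b1²+c1²+d1²+2·|a1·d1−b1·c1| and M2 = (a1+n·a2)²+(b1+n·b2)²+n·e²+n·f². -/

import Mathlib

/-- The nuclear norm of a real matrix: the trace of the positive semidefinite
square root of `Wᵀ * W` (equivalently, the sum of the singular values of `W`). -/
noncomputable def nuclearNorm {m k : Type*} [Fintype m] [Fintype k] [DecidableEq k]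
    (W : Matrix m k ℝ) : ℝ :=
  (((Matrix.posSemidef_conjTranspose_mul_self W).1.eigenvectorUnitary : Matrix k k ℝ) *
    Matrix.diagonal (((↑) : ℝ → ℝ) ∘ (√·) ∘ (Matrix.posSemidef_conjTranspose_mul_self W).1.eigenvalues) *
    (star (Matrix.posSemidef_conjTranspose_mul_self W).1.eigenvectorUnitary : Matrix k k ℝ)).trace

/-- The restricted-form matrix in `ℝ^{(2n+2)×(2n)}`.  Rows are indexed by the input
tokens `a_1,…,a_n` (`Sum.inl i`), `b_1,…,b_n` (`Sum.inr (Sum.inl i)`) and the relation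
tokens `r_1, r_2` (`Sum.inr (Sum.inr k)`, `k = 0, 1`); columns by the output tokens
`b_1,…,b_n` (`Sum.inl j`) and `c_1,…,c_n` (`Sum.inr j`). -/
def restrictedW (n : ℕ) (a1 a2 b1 b2 c1 c2 d1 d2 e f g h : ℝ) :
    Matrix (Fin n ⊕ Fin n ⊕ Fin 2) (Fin n ⊕ Fin n) ℝ :=
  fun r y =>
    match r, y with
    | Sum.inl i, Sum.inl j => (if i = j then a1 else 0) + a2
    | Sum.inl i, Sum.inr j => (if i = j then c1 else 0) + c2
    | Sum.inr (Sum.inl i), Sum.inl j => (if i = j then b1 else 0) + b2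
    | Sum.inr (Sum.inl i), Sum.inr j => (if i = j then d1 else 0) + d2
    | Sum.inr (Sum.inr k), Sum.inl _ => if k = 0 then e else f
    | Sum.inr (Sum.inr k), Sum.inr _ => if k = 0 then g else h

/-!
Index the columns by `Fin 2 × Fin n` and let `E` be the averaging projection on `ℝⁿ`. Matrices
`P ⊗ (1 - E) + Q ⊗ E` multiply like the pairs `(P, Q)` of `2 × 2` matrices, and the Gram matrix
`WᵀW` has this form with `P = MᵀM`, `M = !![a1, c1; b1, d1]`, and, under the symmetry constraints,
`Q = M2 • !![1, -1; -1, 1]`. So `√(WᵀW)` corresponds to `(√P, √Q)` and has trace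
`(n - 1) tr √P + tr √Q`, while `tr √A = √(tr A + 2 √(det A))` for every positive semidefinite
`2 × 2` matrix `A`, because `(tr X)² = tr (X²) + 2 det X`.
-/

open Matrix
open scoped MatrixOrder Kronecker

theorem nuclearNorm_eq_trace_sqrt {m k : Type*} [Fintype m] [Fintype k] [DecidableEq k]
    (W : Matrix m k ℝ) : nuclearNorm W = (CFC.sqrt (Wᴴ * W)).trace := by
  have hG := posSemidef_conjTranspose_mul_self W
  rw [nuclearNorm, CFC.sqrt_eq_real_sqrt _ hG.nonneg, cfcₙ_eq_cfc (hf0 := Real.sqrt_zero),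
    hG.1.cfc_eq]
  simp [IsHermitian.cfc, Unitary.conjStarAlgAut_apply, Function.comp_def]

theorem CFC.sqrt_submatrix_equiv {m k : Type*} [Fintype m] [Fintype k] [DecidableEq m]
    [DecidableEq k] {A : Matrix m m ℝ} (hA : 0 ≤ A) (e : k ≃ m) :
    CFC.sqrt (A.submatrix e e) = (CFC.sqrt A).submatrix e e :=
  CFC.sqrt_unique (by rw [submatrix_mul_equiv, CFC.sqrt_mul_sqrt_self A hA])
    ((posSemidef_submatrix_equiv e).2 (CFC.sqrt_nonneg A).posSemidef).nonneg

theorem Matrix.trace_submatrix_equiv {m k R : Type*} [Fintype m] [Fintype k] [AddCommMonoid R]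
    (A : Matrix m m R) (e : k ≃ m) : (A.submatrix e e).trace = A.trace :=
  e.sum_comp fun i => A i i

theorem Matrix.trace_sq_fin_two {R : Type*} [CommRing R] (X : Matrix (Fin 2) (Fin 2) R) :
    X.trace ^ 2 = (X * X).trace + 2 * X.det := by
  simp only [trace_fin_two, det_fin_two, mul_apply, Fin.sum_univ_two]
  ring

theorem Matrix.PosSemidef.trace_sqrt_fin_two {A : Matrix (Fin 2) (Fin 2) ℝ}
    (hA : A.PosSemidef) : (CFC.sqrt A).trace = √(A.trace + 2 * √A.det) := by
  have hsq := trace_sq_fin_two (CFC.sqrt A)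
  rw [CFC.sqrt_mul_sqrt_self A hA.nonneg, hA.det_sqrt, RCLike.sqrt_real] at hsq
  rw [← hsq, Real.sqrt_sq (CFC.sqrt_nonneg A).posSemidef.trace_nonneg]

section kronAvg

variable {ι κ : Type*} [Fintype ι]

variable (ι) in
noncomputable def avgProj : Matrix ι ι ℝ := (Fintype.card ι : ℝ)⁻¹ • of fun _ _ => 1

theorem isStarProjection_avgProj [Nonempty ι] : IsStarProjection (avgProj ι) where
  isIdempotentElem := by
    ext i j
    simp [avgProj, mul_apply]
  isSelfAdjoint := by
    ext i j
    simp [avgProj]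

theorem trace_avgProj [Nonempty ι] : (avgProj ι).trace = 1 := by
  simp [avgProj, trace]

variable [DecidableEq ι]

noncomputable def kronAvg (P Q : Matrix κ κ ℝ) : Matrix (κ × ι) (κ × ι) ℝ :=
  P ⊗ₖ (1 - avgProj ι) + Q ⊗ₖ avgProj ι

theorem kronAvg_apply (P Q : Matrix κ κ ℝ) (s t : κ) (i j : ι) :
    kronAvg P Q (s, i) (t, j) =
      (if i = j then P s t else 0) + (Q s t - P s t) / Fintype.card ι := by
  simp only [kronAvg, avgProj, smul_of, Matrix.add_apply, kroneckerMap_apply, Matrix.sub_apply,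
    one_apply, of_apply, Pi.smul_apply, smul_eq_mul, mul_one]
  split_ifs <;> ring

theorem kronAvg_mul_kronAvg [Fintype κ] [Nonempty ι] (P Q P' Q' : Matrix κ κ ℝ) :
    (kronAvg P Q : Matrix (κ × ι) (κ × ι) ℝ) * kronAvg P' Q' = kronAvg (P * P') (Q * Q') := by
  have hE := isStarProjection_avgProj (ι := ι)
  simp only [kronAvg, add_mul, mul_add, ← mul_kronecker_mul, hE.isIdempotentElem.eq,
    hE.one_sub.isIdempotentElem.eq, hE.mul_one_sub_self, hE.one_sub_mul_self, kronecker_zero,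
    add_zero, zero_add]

theorem kronAvg_nonneg [Fintype κ] [Nonempty ι] {P Q : Matrix κ κ ℝ} (hP : 0 ≤ P) (hQ : 0 ≤ Q) :
    0 ≤ (kronAvg P Q : Matrix (κ × ι) (κ × ι) ℝ) := by
  have hE := isStarProjection_avgProj (ι := ι)
  exact ((hP.posSemidef.kronecker hE.one_sub_nonneg.posSemidef).add
    (hQ.posSemidef.kronecker hE.nonneg.posSemidef)).nonneg

theorem trace_kronAvg [Fintype κ] [Nonempty ι] (P Q : Matrix κ κ ℝ) :
    (kronAvg P Q : Matrix (κ × ι) (κ × ι) ℝ).trace =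
      ((Fintype.card ι : ℝ) - 1) * P.trace + Q.trace := by
  simp only [kronAvg, trace_add, trace_kronecker, trace_sub, trace_one, trace_avgProj, mul_one]
  ring

theorem CFC.sqrt_kronAvg [Fintype κ] [DecidableEq κ] [Nonempty ι] {P Q : Matrix κ κ ℝ}
    (hP : 0 ≤ P) (hQ : 0 ≤ Q) :
    CFC.sqrt (kronAvg P Q : Matrix (κ × ι) (κ × ι) ℝ) = kronAvg (CFC.sqrt P) (CFC.sqrt Q) :=
  CFC.sqrt_unique
    (by rw [kronAvg_mul_kronAvg, CFC.sqrt_mul_sqrt_self P hP, CFC.sqrt_mul_sqrt_self Q hQ])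
    (kronAvg_nonneg (CFC.sqrt_nonneg P) (CFC.sqrt_nonneg Q))

end kronAvg

def Equiv.sumSelfEquivFinTwoProd (α : Type*) : α ⊕ α ≃ Fin 2 × α :=
  ((finTwoEquiv.prodCongr (Equiv.refl α)).trans (Equiv.boolProdEquivSum α)).symm

@[simp] theorem Equiv.sumSelfEquivFinTwoProd_inl {α : Type*} (i : α) :
    Equiv.sumSelfEquivFinTwoProd α (Sum.inl i) = (0, i) := rfl

@[simp] theorem Equiv.sumSelfEquivFinTwoProd_inr {α : Type*} (i : α) :
    Equiv.sumSelfEquivFinTwoProd α (Sum.inr i) = (1, i) := rfl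

theorem sum_ite_add_mul_ite_add {ι : Type*} [Fintype ι] [DecidableEq ι] (p q u v : ℝ) (i j : ι) :
    ∑ k, ((if k = i then p else 0) + u) * ((if k = j then q else 0) + v) =
      (if i = j then p * q else 0) + (p * v + u * q + Fintype.card ι * (u * v)) := by
  simp only [add_mul, mul_add, ite_mul, mul_ite, zero_mul, mul_zero, Finset.sum_add_distrib,
    Finset.sum_ite_eq', Finset.mem_univ, if_true, Finset.sum_const, Finset.card_univ,
    nsmul_eq_mul, @eq_comm _ j i]
  ring

theorem conjTranspose_restrictedW_mul_self (n : ℕ) [NeZero n]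
    (a1 a2 b1 b2 c1 c2 d1 d2 e f g h : ℝ) :
    (restrictedW n a1 a2 b1 b2 c1 c2 d1 d2 e f g h)ᴴ *
        restrictedW n a1 a2 b1 b2 c1 c2 d1 d2 e f g h =
      (kronAvg (!![a1, c1; b1, d1]ᴴ * !![a1, c1; b1, d1])
        (!![a1 + n * a2, c1 + n * c2; b1 + n * b2, d1 + n * d2]ᴴ *
            !![a1 + n * a2, c1 + n * c2; b1 + n * b2, d1 + n * d2] +
          (n : ℝ) • (!![e, g; f, h]ᴴ * !![e, g; f, h]))).submatrix
        (Equiv.sumSelfEquivFinTwoProd _) (Equiv.sumSelfEquivFinTwoProd _) := by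
  have hn : (n : ℝ) ≠ 0 := NeZero.ne _
  ext (i | i) (j | j) <;>
    simp only [mul_apply, Fintype.sum_sum_type, restrictedW, conjTranspose_apply, star_trivial,
      sum_ite_add_mul_ite_add, Fin.sum_univ_two, submatrix_apply,
      Equiv.sumSelfEquivFinTwoProd_inl, Equiv.sumSelfEquivFinTwoProd_inr, kronAvg_apply,
      Fintype.card_fin, Matrix.add_apply, Matrix.smul_apply, of_apply, cons_val', cons_val_zero,
      cons_val_one, empty_val', cons_val_fin_one, smul_eq_mul, (by decide : (1 : Fin 2) ≠ 0),
      ↓reduceIte] <;>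
    split_ifs <;> field_simp <;> ring

theorem conjTranspose_mul_self_add_smul_of_neg_cols (α β e f c : ℝ) :
    !![α, -α; β, -β]ᴴ * !![α, -α; β, -β] + c • (!![e, -e; f, -f]ᴴ * !![e, -e; f, -f]) =
      (α ^ 2 + β ^ 2 + c * e ^ 2 + c * f ^ 2) • !![1, -1; -1, 1] := by
  ext i j
  fin_cases i <;> fin_cases j <;>
    simp only [conjTranspose_eq_transpose_of_trivial, Fin.zero_eta, Fin.mk_one, Fin.isValue,
      Matrix.add_apply, mul_apply, transpose_apply, of_apply, cons_val', cons_val_zero,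
      cons_val_one, cons_val_fin_one, Fin.sum_univ_two, Matrix.smul_apply, smul_eq_mul, mul_neg,
      neg_mul, mul_one] <;>
    ring

theorem trace_add_two_mul_sqrt_det_conjTranspose_mul_self_fin_two (a b c d : ℝ) :
    (!![a, c; b, d]ᴴ * !![a, c; b, d]).trace + 2 * √(!![a, c; b, d]ᴴ * !![a, c; b, d]).det =
      a ^ 2 + b ^ 2 + c ^ 2 + d ^ 2 + 2 * |a * d - b * c| := by
  rw [det_mul, det_conjTranspose, det_fin_two_of, star_trivial, Real.sqrt_mul_self_eq_abs,
    mul_comm c b]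
  simp only [conjTranspose_eq_transpose_of_trivial, trace_fin_two, mul_apply, transpose_apply,
    of_apply, cons_val', cons_val_zero, cons_val_one, cons_val_fin_one, Fin.sum_univ_two]
  ring

theorem trace_add_two_mul_sqrt_det_smul_fin_two_of_one_neg_one (x : ℝ) :
    (x • !![1, -1; -1, 1]).trace + 2 * √(x • !![1, -1; -1, 1]).det = 2 * x := by
  rw [trace_smul, trace_fin_two_of, det_smul, det_fin_two_of]
  norm_num
  ring

/-- Under the symmetry constraints, the nuclear norm of the restricted-form matrix is
`(n−1)·√M1 + √(2·M2)` with `M1 = a1²+b1²+c1²+d1²+2·|a1·d1−b1·c1|` and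
`M2 = (a1+n·a2)²+(b1+n·b2)²+n·e²+n·f²`. -/
theorem nuclearNorm_restrictedW_symmetric (n : ℕ) (hn : 1 ≤ n)
    (a1 a2 b1 b2 c1 c2 d1 d2 e f g h : ℝ)
    (heg : e = -g) (hfh : f = -h)
    (hac : a1 + c1 + n * (a2 + c2) = 0) (hbd : b1 + d1 + n * (b2 + d2) = 0) :
    nuclearNorm (restrictedW n a1 a2 b1 b2 c1 c2 d1 d2 e f g h) =
      ((n : ℝ) - 1) * Real.sqrt (a1 ^ 2 + b1 ^ 2 + c1 ^ 2 + d1 ^ 2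
          + 2 * |a1 * d1 - b1 * c1|) +
        Real.sqrt (2 * ((a1 + n * a2) ^ 2 + (b1 + n * b2) ^ 2
          + n * e ^ 2 + n * f ^ 2)) := by
  have : NeZero n := ⟨by omega⟩
  have hc : c1 + n * c2 = -(a1 + n * a2) := by linear_combination hac
  have hd : d1 + n * d2 = -(b1 + n * b2) := by linear_combination hbd
  have hg : g = -e := by linear_combination heg
  have hh : h = -f := by linear_combination hfh
  have hA := posSemidef_conjTranspose_mul_self !![a1, c1; b1, d1]
  have hB := (posSemidef_conjTranspose_mul_self
    !![a1 + n * a2, -(a1 + n * a2); b1 + n * b2, -(b1 + n * b2)]).add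
    ((posSemidef_conjTranspose_mul_self !![e, -e; f, -f]).smul (Nat.cast_nonneg (α := ℝ) n))
  rw [conjTranspose_mul_self_add_smul_of_neg_cols] at hB
  rw [nuclearNorm_eq_trace_sqrt, conjTranspose_restrictedW_mul_self, hc, hd, hg, hh,
    conjTranspose_mul_self_add_smul_of_neg_cols,
    CFC.sqrt_submatrix_equiv (kronAvg_nonneg hA.nonneg hB.nonneg), trace_submatrix_equiv,
    CFC.sqrt_kronAvg hA.nonneg hB.nonneg, trace_kronAvg, Fintype.card_fin,
    hA.trace_sqrt_fin_two, hB.trace_sqrt_fin_two,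
    trace_add_two_mul_sqrt_det_conjTranspose_mul_self_fin_two,
    trace_add_two_mul_sqrt_det_smul_fin_two_of_one_neg_one]
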